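/- arXiv:2308.08890 — 2 statements merged into one kernel-verified Lean document; each statement's English description precedes it below -/
import Mathlib

section
/- Let H be a Hilbert space and L1, L2, L3, L4 closed subspaces such that (L2 ∨ L4) ∩ (L3 ∨ L4) = L4 and L2 ∨ L3 is separable. If L1 ⊥ L2 | (L3 ∨ L4) and L1 ⊥ L3 | (L2 ∨ L4), then L1 ⊥ (L2 ∨ L3) | L4 (intersection property of conditional orthogonality). -/
/-!
For `x ∈ L1` write `M₂ = L2 ∨ L4`, `M₃ = L3 ∨ L4` and `K = L2 ∨ L3 ∨ L4`. The hypothesis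
`L1 ⊥ L3 | M₂` says that the residual `x - P_{M₂} x` is orthogonal to `L3`, and it is orthogonal
to `M₂` anyway, so it is orthogonal to all of `K`; likewise `x - P_{M₃} x ⊥ K`. The difference
`P_{M₂} x - P_{M₃} x` then lies in `K ∩ Kᗮ = 0`, so this common projection lies in
`M₂ ∩ M₃ = L4` and is therefore `P_{L4} x`. Hence `x - P_{L4} x ⊥ K ⊇ L2 ∨ L3`.
-/

open scoped InnerProductSpace

def CondOrth {H : Type*} [NormedAddCommGroup H] [InnerProductSpace ℂ H]
    (L1 L2 L3 : Submodule ℂ H) [CompleteSpace L3] : Prop :=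
  ∀ x ∈ L1, ∀ y ∈ L2,
    ⟪x - (Submodule.orthogonalProjectionOnto L3 x : H), y - (Submodule.orthogonalProjectionOnto L3 y : H)⟫_ℂ = 0

open Submodule

section Projection

variable {𝕜 E : Type*} [RCLike 𝕜] [NormedAddCommGroup E] [InnerProductSpace 𝕜 E]

theorem Submodule.starProjection_eq_of_sub_mem_orthogonal {K U V : Submodule 𝕜 E}
    [U.HasOrthogonalProjection] [V.HasOrthogonalProjection] (hU : U ≤ K) (hV : V ≤ K) {x : E}
    (hxU : x - U.starProjection x ∈ Kᗮ) (hxV : x - V.starProjection x ∈ Kᗮ) :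
    U.starProjection x = V.starProjection x := by
  have hdiff : U.starProjection x - V.starProjection x ∈ K ⊓ Kᗮ :=
    ⟨K.sub_mem (hU (U.starProjection_apply_mem x)) (hV (V.starProjection_apply_mem x)),
      by simpa using Kᗮ.sub_mem hxV hxU⟩
  rwa [K.inf_orthogonal_eq_bot, mem_bot, sub_eq_zero] at hdiff

theorem Submodule.starProjection_eq_of_le_of_mem {U V : Submodule 𝕜 E}
    [U.HasOrthogonalProjection] [V.HasOrthogonalProjection] (h : U ≤ V) {x : E}
    (hx : V.starProjection x ∈ U) : U.starProjection x = V.starProjection x :=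
  eq_starProjection_of_mem_orthogonal hx (orthogonal_le h (V.sub_starProjection_mem_orthogonal x))

end Projection

theorem CondOrth.sub_starProjection_mem_orthogonal_sup {H : Type*} [NormedAddCommGroup H]
    [InnerProductSpace ℂ H] {L1 L2 M : Submodule ℂ H}
    [CompleteSpace M] (h : CondOrth L1 L2 M) {x : H} (hx : x ∈ L1) :
    x - M.starProjection x ∈ (L2 ⊔ M)ᗮ := by
  have hxM := M.sub_starProjection_mem_orthogonal x
  rw [← inf_orthogonal]
  refine ⟨fun y hy => ?_, hxM⟩
  have hxy := h x hx y hy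
  rw [← starProjection_apply, ← starProjection_apply, inner_sub_right,
    inner_eq_zero_symm.mp (hxM _ (M.starProjection_apply_mem y)), sub_zero] at hxy
  exact inner_eq_zero_symm.mp hxy

theorem condOrth_intersection_general {H : Type*} [NormedAddCommGroup H] [InnerProductSpace ℂ H]
    [CompleteSpace H] (L1 L2 L3 L4 : Submodule ℂ H)
    [CompleteSpace L4]
    (hinter : (L2 ⊔ L4).topologicalClosure ⊓ (L3 ⊔ L4).topologicalClosure = L4)
    (ha : CondOrth L1 L2 ((L3 ⊔ L4).topologicalClosure))
    (hb : CondOrth L1 L3 ((L2 ⊔ L4).topologicalClosure)) :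
    CondOrth L1 ((L2 ⊔ L3).topologicalClosure) L4 := by
  intro x hx y hy
  set M₂ := (L2 ⊔ L4).topologicalClosure
  set M₃ := (L3 ⊔ L4).topologicalClosure
  set K := (L2 ⊔ L3 ⊔ L4).topologicalClosure
  have hM₂ : M₂ ≤ K := topologicalClosure_mono (sup_le_sup_right le_sup_left _)
  have hM₃ : M₃ ≤ K := topologicalClosure_mono (sup_le_sup_right le_sup_right _)
  have hres₂ : x - M₂.starProjection x ∈ Kᗮ := by
    refine (orthogonal_closure _).ge (orthogonal_le ?_ (hb.sub_starProjection_mem_orthogonal_sup hx))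
    calc L2 ⊔ L3 ⊔ L4 = L3 ⊔ (L2 ⊔ L4) := by ac_rfl
      _ ≤ L3 ⊔ M₂ := sup_le_sup_left (le_topologicalClosure _) _
  have hres₃ : x - M₃.starProjection x ∈ Kᗮ := by
    refine (orthogonal_closure _).ge (orthogonal_le ?_ (ha.sub_starProjection_mem_orthogonal_sup hx))
    calc L2 ⊔ L3 ⊔ L4 = L2 ⊔ (L3 ⊔ L4) := by ac_rfl
      _ ≤ L2 ⊔ M₃ := sup_le_sup_left (le_topologicalClosure _) _
  have hP : M₂.starProjection x = M₃.starProjection x :=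
    starProjection_eq_of_sub_mem_orthogonal hM₂ hM₃ hres₂ hres₃
  have hP₄ : L4.starProjection x = M₂.starProjection x := by
    refine starProjection_eq_of_le_of_mem (le_sup_right.trans (le_topologicalClosure _)) ?_
    exact hinter.le ⟨M₂.starProjection_apply_mem x, hP ▸ M₃.starProjection_apply_mem x⟩
  have hL4 : L4 ≤ K := le_sup_right.trans (le_topologicalClosure _)
  have hy' : y - L4.starProjection y ∈ K :=
    K.sub_mem (topologicalClosure_mono le_sup_left hy) (hL4 (L4.starProjection_apply_mem y))
  simp only [← starProjection_apply]
  rw [hP₄]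
  exact inner_eq_zero_symm.mp (hres₂ _ hy')

/-- Intersection property of conditional orthogonality: if
`(L2 ∨ L4) ∩ (L3 ∨ L4) = L4`, `L2 ∨ L3` is separable, `L1 ⊥ L2 | (L3 ∨ L4)` and
`L1 ⊥ L3 | (L2 ∨ L4)`, then `L1 ⊥ (L2 ∨ L3) | L4`. -/
theorem condOrth_intersection {H : Type*} [NormedAddCommGroup H] [InnerProductSpace ℂ H]
    [CompleteSpace H] (L1 L2 L3 L4 : Submodule ℂ H)
    (h1 : IsClosed (L1 : Set H)) (h2 : IsClosed (L2 : Set H))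
    (h3 : IsClosed (L3 : Set H)) (h4 : IsClosed (L4 : Set H))
    [CompleteSpace L4]
    (hinter : (L2 ⊔ L4).topologicalClosure ⊓ (L3 ⊔ L4).topologicalClosure = L4)
    (hsep : TopologicalSpace.SeparableSpace ((L2 ⊔ L3).topologicalClosure : Submodule ℂ H))
    (ha : CondOrth L1 L2 ((L3 ⊔ L4).topologicalClosure))
    (hb : CondOrth L1 L3 ((L2 ⊔ L4).topologicalClosure)) :
    CondOrth L1 ((L2 ⊔ L3).topologicalClosure) L4 :=
  condOrth_intersection_general L1 L2 L3 L4 hinter ha hb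
end

section
/- Let H be a Hilbert space and L1, L2, L3 closed subspaces of H, so that L3 ⊆ L2 ∨ L3. Then L1 ⊥ L2 | L3 holds if and only if P_{L2 ∨ L3} X = P_{L3} X for all X ∈ L1, where P denotes orthogonal projection. -/
open scoped InnerProductSpace

/-- Projection characterisation of conditional orthogonality (Lindquist–Picci,
Proposition 2.4.2): `L1 ⊥ L2 | L3` iff the orthogonal projections of every element of `L1`
onto `L2 ∨ L3` and onto `L3` coincide. -/
theorem condOrth_iff_projection_eq {H : Type*} [NormedAddCommGroup H] [InnerProductSpace ℂ H]
    [CompleteSpace H] (L1 L2 L3 : Submodule ℂ H)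
    (h1 : IsClosed (L1 : Set H)) (h2 : IsClosed (L2 : Set H)) (h3 : IsClosed (L3 : Set H))
    [CompleteSpace L3] :
    CondOrth L1 L2 L3 ↔
      ∀ x ∈ L1,
        ((Submodule.orthogonalProjectionOnto ((L2 ⊔ L3).topologicalClosure) x : H)
          = (Submodule.orthogonalProjectionOnto L3 x : H)) := by
  set M := (L2 ⊔ L3).topologicalClosure with hM
  haveI : CompleteSpace M :=
    (L2 ⊔ L3).isClosed_topologicalClosure.completeSpace_coe
  have hMorth : Mᗮ = (L2 ⊔ L3)ᗮ := by
    rw [hM, ← Submodule.orthogonal_orthogonal_eq_closure,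
      Submodule.triorthogonal_eq_orthogonal]
  have hL3M : L3 ≤ M := le_trans le_sup_right (L2 ⊔ L3).le_topologicalClosure
  have hL2M : L2 ≤ M := le_trans le_sup_left (L2 ⊔ L3).le_topologicalClosure
  constructor
  · intro h x hx
    rw [← Submodule.starProjection_apply, ← Submodule.starProjection_apply]
    apply Submodule.eq_starProjection_of_mem_orthogonal (hL3M (Submodule.orthogonalProjectionOnto L3 x).2)
    rw [hMorth, Submodule.mem_orthogonal]
    intro u hu
    rcases Submodule.mem_sup.1 hu with ⟨y, hy, z, hz, rfl⟩
    rw [inner_add_left]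
    have h1' : ⟪x - (Submodule.orthogonalProjectionOnto L3 x : H), y⟫_ℂ = 0 := by
      have := h x hx y hy
      have h2' : ⟪x - (Submodule.orthogonalProjectionOnto L3 x : H),
          (Submodule.orthogonalProjectionOnto L3 y : H)⟫_ℂ = 0 :=
        inner_eq_zero_symm.1 <| (Submodule.mem_orthogonal _ _).1 (by rw [← Submodule.starProjection_apply]; exact Submodule.sub_starProjection_mem_orthogonal (K := L3) x : x - (Submodule.orthogonalProjectionOnto L3 x : H) ∈ L3ᗮ)
          _ (Submodule.orthogonalProjectionOnto L3 y).2
      rw [inner_sub_right, h2', sub_zero] at this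
      exact this
    have h2' : ⟪x - (Submodule.orthogonalProjectionOnto L3 x : H), z⟫_ℂ = 0 :=
      inner_eq_zero_symm.1 <| (Submodule.mem_orthogonal _ _).1 (by rw [← Submodule.starProjection_apply]; exact Submodule.sub_starProjection_mem_orthogonal (K := L3) x : x - (Submodule.orthogonalProjectionOnto L3 x : H) ∈ L3ᗮ) _ hz
    rw [inner_eq_zero_symm] at h1' h2'
    rw [h1', h2', add_zero]
  · intro h x hx y hy
    have hxM : x - (Submodule.orthogonalProjectionOnto L3 x : H) ∈ Mᗮ := by
      rw [← h x hx]
      rw [← Submodule.starProjection_apply]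
      exact Submodule.sub_starProjection_mem_orthogonal x
    have hyM : y - (Submodule.orthogonalProjectionOnto L3 y : H) ∈ M :=
      M.sub_mem (hL2M hy) (hL3M (Submodule.orthogonalProjectionOnto L3 y).2)
    rw [inner_eq_zero_symm]
    exact (Submodule.mem_orthogonal _ _).1 hxM _ hyM
end
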